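/- arXiv:2304.01803 — 4 statements merged into one kernel-verified Lean document; each statement's English description precedes it below -/
import Mathlib

section
/- Let μ be a doubling measure on a metric space X and x ∈ X. Then X is uniformly perfect at x if and only if μ is reverse-doubling at x, i.e. there exist constants C, κ̂ > 1 such that μ(B(x, κ̂ r)) ≥ C μ(B(x,r)) for all 0 < r < diam X / (2κ̂). -/
open MeasureTheory Metric Set ENNReal

open Classical in

/-- Pointwise Besov energy `∫_Y |u(x)-u(y)|^p / d(x,y)^{θp} · dν(y)/ν(B(x,d(x,y)))`. -/
noncomputable def besovPointEnergy {Y : Type*} [MetricSpace Y] [MeasurableSpace Y]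
    (ν : Measure Y) (θ p : ℝ) (u : Y → ℝ) (x : Y) : ℝ≥0∞ :=
  ∫⁻ y, (if x = y then 0 else
    ENNReal.ofReal (|u x - u y| ^ p) /
      (ENNReal.ofReal (dist x y ^ (θ * p)) * ν (ball x (dist x y)))) ∂ν

/-- The Besov seminorm to the power `p`:
`[u]_{θ,p}^p = ∫_Y ∫_Y |u(x)-u(y)|^p / d(x,y)^{θp} · dν(y) dν(x)/ν(B(x,d(x,y)))`. -/
noncomputable def besovEnergy {Y : Type*} [MetricSpace Y] [MeasurableSpace Y]
    (ν : Measure Y) (θ p : ℝ) (u : Y → ℝ) : ℝ≥0∞ :=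
  ∫⁻ x, besovPointEnergy ν θ p u x ∂ν

/-- `u` is admissible for the Besov norm-capacity of `E`:
`0 ≤ u ≤ 1` everywhere and `u = 1` in a neighbourhood of `E`. -/
def normAdmissible {Y : Type*} [MetricSpace Y] (E : Set Y) (u : Y → ℝ) : Prop :=
  (∀ z, 0 ≤ u z ∧ u z ≤ 1) ∧ ∃ G : Set Y, IsOpen G ∧ E ⊆ G ∧ ∀ z ∈ G, u z = 1

/-- The Besov norm-capacity `C_{θ,p}(E) = inf (‖u‖_{L^p}^p + [u]_{θ,p}^p)` over admissible `u`. -/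
noncomputable def besovNormCap {Y : Type*} [MetricSpace Y] [MeasurableSpace Y]
    (ν : Measure Y) (θ p : ℝ) (E : Set Y) : ℝ≥0∞ :=
  ⨅ (u : Y → ℝ) (_ : normAdmissible E u),
    (∫⁻ x, ENNReal.ofReal (|u x| ^ p) ∂ν) + besovEnergy ν θ p u

/-- `u` is admissible for the Besov condenser capacity of `(E, Ω)`:
`0 ≤ u ≤ 1` everywhere, `u = 1` in a neighbourhood of `E`, and `supp u ⋐ Ω`. -/
def condAdmissible {Y : Type*} [MetricSpace Y] (E Ω : Set Y) (u : Y → ℝ) : Prop :=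
  (∀ z, 0 ≤ u z ∧ u z ≤ 1) ∧ (∃ G : Set Y, IsOpen G ∧ E ⊆ G ∧ ∀ z ∈ G, u z = 1) ∧
    IsCompact (tsupport u) ∧ tsupport u ⊆ Ω

/-- The Besov condenser capacity `cap_{θ,p}(E,Ω) = inf [u]_{θ,p}^p` over admissible `u`. -/
noncomputable def besovCondCap {Y : Type*} [MetricSpace Y] [MeasurableSpace Y]
    (ν : Measure Y) (θ p : ℝ) (E Ω : Set Y) : ℝ≥0∞ :=
  ⨅ (u : Y → ℝ) (_ : condAdmissible E Ω u), besovEnergy ν θ p u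

/-- `ν` is doubling with constant `C`. -/
def IsDoublingWith {Y : Type*} [MetricSpace Y] [MeasurableSpace Y]
    (ν : Measure Y) (C : ℝ) : Prop :=
  ∀ (x : Y) (r : ℝ), 0 < r → ν (ball x (2 * r)) ≤ ENNReal.ofReal C * ν (ball x r)

/-- `ν` is positive and finite on balls. -/
def BallsPosFinite {Y : Type*} [MetricSpace Y] [MeasurableSpace Y] (ν : Measure Y) : Prop :=
  ∀ (x : Y) (r : ℝ), 0 < r → 0 < ν (ball x r) ∧ ν (ball x r) < ∞

/-- `X` is uniformly perfect at `x` with constant `κ`. -/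
def UnifPerfectAt {Y : Type*} [MetricSpace Y] (x : Y) (κ : ℝ) : Prop :=
  ∀ r : ℝ, 0 < r → ball x (κ * r) ≠ univ → (ball x (κ * r) \ ball x r).Nonempty


/-!
If `B(x, 2κr) \ B(x, 2r)` contains a point `y`, then `B(y, r)` is disjoint from `B(x, r)`, both
lie in `B(x, (2κ + 1) r)`, and doubling compares `ν (B(x, r))` with `ν (B(y, r))`; so the larger
ball gains a fixed proportion of `ν (B(x, r))`. Conversely, if `B(x, (2κ + 1) r) \ B(x, r)` is
empty while `B(x, (2κ + 1) r) ≠ X`, then `r` is admissible for reverse doubling with dilation `κ`,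
which would force `C ν (B(x, r)) ≤ ν (B(x, r))` for a ball of positive finite measure.
-/

def ReverseDoublingAt {X : Type*} [MetricSpace X] [MeasurableSpace X]
    (ν : Measure X) (x : X) (C κ : ℝ) : Prop :=
  ∀ r : ℝ, 0 < r → ENNReal.ofReal (2 * κ * r) < ediam (univ : Set X) →
    ENNReal.ofReal C * ν (ball x r) ≤ ν (ball x (κ * r))

theorem MeasureTheory.measure_le_of_disjoint_of_le_mul {Ω : Type*} [MeasurableSpace Ω]
    {μ : Measure Ω} {A B S : Set Ω} {c : ℝ≥0∞} (hAB : μ A ≤ c * μ B) (hdisj : Disjoint A B)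
    (hB : MeasurableSet B) (hAS : A ⊆ S) (hBS : B ⊆ S) :
    (1 + c⁻¹) * μ A ≤ μ S := by
  have hcB : c⁻¹ * μ A ≤ μ B := by
    rw [← ENNReal.div_eq_inv_mul]
    exact ENNReal.div_le_of_le_mul' hAB
  calc (1 + c⁻¹) * μ A = μ A + c⁻¹ * μ A := by ring
    _ ≤ μ A + μ B := by gcongr
    _ = μ (A ∪ B) := (measure_union hdisj hB).symm
    _ ≤ μ S := measure_mono (union_subset hAS hBS)

section

variable {X : Type*} [MetricSpace X]

theorem Metric.ball_ne_univ_of_ofReal_two_mul_lt_ediam {x : X} {R : ℝ}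
    (h : ENNReal.ofReal (2 * R) < ediam (univ : Set X)) : ball x R ≠ univ := by
  intro hball
  refine h.not_ge ?_
  calc ediam (univ : Set X) = ediam (eball x (ENNReal.ofReal R)) := by rw [eball_ofReal, hball]
    _ ≤ 2 * ENNReal.ofReal R := ediam_eball_le
    _ ≤ ENNReal.ofReal (2 * R) := by rw [ENNReal.ofReal_mul zero_le_two, ENNReal.ofReal_ofNat]

variable [MeasurableSpace X]

theorem IsDoublingWith.measure_ball_two_pow_mul_le {ν : Measure X} {C : ℝ}
    (hdoub : IsDoublingWith ν C) (y : X) (m : ℕ) {r : ℝ} (hr : 0 < r) :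
    ν (ball y (2 ^ m * r)) ≤ ENNReal.ofReal C ^ m * ν (ball y r) := by
  induction m with
  | zero => simp
  | succ n ih =>
    calc ν (ball y (2 ^ (n + 1) * r)) = ν (ball y (2 * (2 ^ n * r))) := by ring_nf
      _ ≤ ENNReal.ofReal C * ν (ball y (2 ^ n * r)) := hdoub y _ (by positivity)
      _ ≤ ENNReal.ofReal C * (ENNReal.ofReal C ^ n * ν (ball y r)) := by gcongr
      _ = ENNReal.ofReal C ^ (n + 1) * ν (ball y r) := by ring

theorem IsDoublingWith.measure_ball_le_of_add_dist_le {ν : Measure X} {C : ℝ}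
    (hdoub : IsDoublingWith ν C) {x y : X} {r : ℝ} (hr : 0 < r) {m : ℕ}
    (hm : r + dist x y ≤ 2 ^ m * r) :
    ν (ball x r) ≤ ENNReal.ofReal C ^ m * ν (ball y r) :=
  (measure_mono (ball_subset_ball' hm)).trans (hdoub.measure_ball_two_pow_mul_le y m hr)

theorem UnifPerfectAt.reverseDoublingAt [OpensMeasurableSpace X] {ν : Measure X} {Cν : ℝ}
    (hCν : 0 < Cν) (hdoub : IsDoublingWith ν Cν) {x : X} {κ : ℝ}
    (hup : UnifPerfectAt x κ) {m : ℕ} (hm : 2 * κ + 1 ≤ 2 ^ m) :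
    ReverseDoublingAt ν x (1 + (Cν ^ m)⁻¹) (2 * κ + 1) := by
  intro r hr hdiam
  have hne : ball x (κ * (2 * r)) ≠ univ := by
    refine ball_ne_univ_of_ofReal_two_mul_lt_ediam (hdiam.trans_le' ?_)
    exact ENNReal.ofReal_le_ofReal (by nlinarith)
  obtain ⟨y, hyκ, hy2⟩ := hup (2 * r) (by positivity) hne
  rw [mem_ball] at hyκ
  rw [mem_ball, not_lt] at hy2
  have hxy : ν (ball x r) ≤ ENNReal.ofReal (Cν ^ m) * ν (ball y r) := by
    rw [ENNReal.ofReal_pow hCν.le]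
    exact hdoub.measure_ball_le_of_add_dist_le hr (by rw [dist_comm]; nlinarith)
  rw [ENNReal.ofReal_add zero_le_one (by positivity), ENNReal.ofReal_one,
    ENNReal.ofReal_inv_of_pos (by positivity)]
  exact measure_le_of_disjoint_of_le_mul hxy
    (ball_disjoint_ball (by rw [dist_comm]; linarith)) measurableSet_ball
    (ball_subset_ball (by nlinarith)) (ball_subset_ball' (by linarith))

theorem ReverseDoublingAt.unifPerfectAt {ν : Measure X} (hballs : BallsPosFinite ν) {x : X}
    {C κ : ℝ} (hC : 1 < C) (hκ : 0 ≤ κ) (hrev : ReverseDoublingAt ν x C κ) :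
    UnifPerfectAt x (2 * κ + 1) := by
  intro r hr hne
  by_contra hempty
  rw [not_nonempty_iff_eq_empty, sdiff_eq_empty] at hempty
  obtain ⟨y, hy⟩ := (ne_univ_iff_exists_notMem _).mp hne
  rw [mem_ball, not_lt] at hy
  have hdiam : ENNReal.ofReal (2 * κ * r) < ediam (univ : Set X) :=
    calc ENNReal.ofReal (2 * κ * r) < ENNReal.ofReal ((2 * κ + 1) * r) :=
          (ENNReal.ofReal_lt_ofReal_iff (by positivity)).mpr (by linarith)
      _ ≤ edist y x := by rw [edist_dist]; exact ENNReal.ofReal_le_ofReal hy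
      _ ≤ ediam (univ : Set X) := edist_le_ediam_of_mem (mem_univ _) (mem_univ _)
  have hCle : ENNReal.ofReal C * ν (ball x r) ≤ 1 * ν (ball x r) :=
    calc ENNReal.ofReal C * ν (ball x r) ≤ ν (ball x (κ * r)) := hrev r hr hdiam
      _ ≤ ν (ball x ((2 * κ + 1) * r)) := measure_mono (ball_subset_ball (by nlinarith))
      _ ≤ 1 * ν (ball x r) := by rw [one_mul]; exact measure_mono hempty
  obtain ⟨hpos, hfin⟩ := hballs x r hr
  have := (ENNReal.mul_le_mul_iff_left hpos.ne' hfin.ne).mp hCle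
  exact (ENNReal.one_lt_ofReal.mpr hC).not_ge this

end

theorem stmt1 {X : Type*} [MetricSpace X] [MeasurableSpace X] [BorelSpace X]
    (ν : Measure X) (x : X) (Cν : ℝ) (hC : 1 < Cν)
    (hdoub : IsDoublingWith ν Cν) (hballs : BallsPosFinite ν) :
    (∃ κ : ℝ, 1 < κ ∧ UnifPerfectAt x κ) ↔
      (∃ C κ : ℝ, 1 < C ∧ 1 < κ ∧ ∀ r : ℝ, 0 < r →
        ENNReal.ofReal (2 * κ * r) < EMetric.diam (univ : Set X) →
        ENNReal.ofReal C * ν (ball x r) ≤ ν (ball x (κ * r))) := by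
  constructor
  · rintro ⟨κ, hκ, hup⟩
    obtain ⟨m, hm⟩ := pow_unbounded_of_one_lt (2 * κ + 1) (one_lt_two (α := ℝ))
    have hCν : 0 < Cν := by linarith
    exact ⟨1 + (Cν ^ m)⁻¹, 2 * κ + 1, lt_add_of_pos_right 1 (inv_pos.mpr (pow_pos hCν m)),
      by linarith, hup.reverseDoublingAt hCν hdoub hm.le⟩
  · rintro ⟨C, κ, hC1, hκ, hrev⟩
    exact ⟨2 * κ + 1, by linarith,
      ReverseDoublingAt.unifPerfectAt hballs hC1 (by linarith) hrev⟩
end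

section
/- Let ν be a doubling measure on a complete metric space Y, 0 < θ < 1, 1 ≤ p < ∞, and let η: Y → [0,1] be an M-Lipschitz function. Then for every x ∈ Y, the integral I(x) = ∫_Y |η(x)-η(y)|^p / d(x,y)^{θp} · dν(y)/ν(B(x,d(x,y))) satisfies I(x) ≤ C M^{θp}, where C depends only on θ, p and the doubling constant of ν. -/
open MeasureTheory Metric Set ENNReal

/-!
Cut `Y \ {x}` into the dyadic shells `2^k / K ≤ d(x,y) < 2^(k+1) / K`, `k ∈ ℤ`, where `K` is the
Lipschitz constant of `η`. On the `k`-th shell `|η x - η y| ≤ min 1 (2^(k+1))`, while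
`d(x,y)^(θp)` and `ν (B(x, d(x,y)))` are at least their values at radius `2^k / K`, and by
doubling the shell has measure at most `C_ν ν (B(x, 2^k / K))`. So the shell contributes at most
`C_ν K^(θp) min 1 (2^(k+1))^p / 2^(kθp)`, which is summable over `k ∈ ℤ` because `0 < θp < p`.
-/

open scoped NNReal

noncomputable def dyadicWeight (p q : ℝ) (k : ℤ) : ℝ :=
  min 1 (2 ^ (k + 1)) ^ p / (2 ^ q) ^ k

lemma dyadicWeight_pos (p q : ℝ) (k : ℤ) : 0 < dyadicWeight p q k := by
  unfold dyadicWeight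
  positivity

lemma summable_dyadicWeight {p q : ℝ} (hq : 0 < q) (hqp : q < p) :
    Summable (dyadicWeight p q) := by
  have h2q : 1 < (2 : ℝ) ^ q := Real.one_lt_rpow one_lt_two hq
  have h2qp : (2 : ℝ) ^ q < 2 ^ p := Real.rpow_lt_rpow_of_exponent_lt one_lt_two hqp
  apply Summable.of_nat_of_neg
  · refine Summable.of_nonneg_of_le (fun n => (dyadicWeight_pos p q n).le) (fun n => ?_)
      (summable_geometric_of_lt_one (by positivity) (inv_lt_one_of_one_lt₀ h2q))
    rw [dyadicWeight, zpow_natCast, inv_pow, ← one_div]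
    exact div_le_div_of_nonneg_right
      (Real.rpow_le_one (by positivity) (min_le_left _ _) (hq.trans hqp).le) (by positivity)
  · refine Summable.of_nonneg_of_le (fun n => (dyadicWeight_pos p q _).le) (fun n => ?_)
      ((summable_geometric_of_lt_one (by positivity)
        ((div_lt_one (by positivity)).mpr h2qp)).mul_left (2 ^ p))
    calc dyadicWeight p q (-n)
        ≤ (2 ^ (-(n : ℤ) + 1) : ℝ) ^ p / (2 ^ q) ^ (-(n : ℤ)) :=
          div_le_div_of_nonneg_right
            (Real.rpow_le_rpow (by positivity) (min_le_right _ _) (hq.trans hqp).le)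
            (by positivity)
      _ = 2 ^ p * (2 ^ q / 2 ^ p) ^ n := by
          rw [← Real.rpow_zpow_comm zero_le_two, zpow_add₀ (by positivity), zpow_neg, zpow_neg,
            zpow_natCast, zpow_natCast, zpow_one, div_pow]
          field_simp

section MetricSpace

variable {Y : Type*} [MetricSpace Y]

def dyadicShell (x : Y) (r : ℝ) (k : ℤ) : Set Y :=
  {y | dist x y ∈ Ico (2 ^ k * r) (2 ^ (k + 1) * r)}

lemma iUnion_dyadicShell (x : Y) {r : ℝ} (hr : 0 < r) : ⋃ k, dyadicShell x r k = {x}ᶜ := by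
  ext y
  simp only [mem_iUnion, dyadicShell, mem_ofPred_eq, mem_Ico, mem_compl_singleton_iff]
  constructor
  · rintro ⟨k, hk, -⟩ rfl
    simp only [dist_self] at hk
    exact (mul_pos (zpow_pos two_pos k) hr).not_ge hk
  · intro hyx
    obtain ⟨k, hk⟩ := exists_mem_Ico_zpow (div_pos (dist_pos.mpr (Ne.symm hyx)) hr) one_lt_two
    exact ⟨k, (le_div_iff₀ hr).mp hk.1, (div_lt_iff₀ hr).mp hk.2⟩

lemma abs_sub_le_min_of_lipschitzWith {u : Y → ℝ} {K : ℝ≥0} (hu : ∀ z, 0 ≤ u z ∧ u z ≤ 1)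
    (hK : LipschitzWith K u) (x y : Y) : |u x - u y| ≤ min 1 (K * dist x y) := by
  refine le_min ?_ (by simpa [Real.dist_eq] using hK.dist_le_mul x y)
  have := hu x
  have := hu y
  rw [abs_sub_le_iff]
  constructor <;> linarith

variable [MeasurableSpace Y] {ν : Measure Y}

lemma measure_dyadicShell_le {C : ℝ} (hν : IsDoublingWith ν C) (x : Y) {r : ℝ} (hr : 0 < r)
    (k : ℤ) : ν (dyadicShell x r k) ≤ ENNReal.ofReal C * ν (ball x (2 ^ k * r)) := by
  have hsub : dyadicShell x r k ⊆ ball x (2 * (2 ^ k * r)) := by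
    intro y hy
    rw [mem_ball, dist_comm, ← mul_assoc, ← zpow_one_add₀ two_ne_zero, add_comm]
    exact hy.2
  exact (measure_mono hsub).trans (hν x _ (mul_pos (zpow_pos two_pos k) hr))

open Classical in
noncomputable def besovKernel (ν : Measure Y) (θ p : ℝ) (u : Y → ℝ) (x y : Y) : ℝ≥0∞ :=
  if x = y then 0 else
    ENNReal.ofReal (|u x - u y| ^ p) /
      (ENNReal.ofReal (dist x y ^ (θ * p)) * ν (ball x (dist x y)))

variable {θ p : ℝ} {u : Y → ℝ} {K : ℝ≥0} {x : Y}

lemma besovPointEnergy_eq_lintegral_besovKernel :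
    besovPointEnergy ν θ p u x = ∫⁻ y, besovKernel ν θ p u x y ∂ν :=
  rfl

lemma support_besovKernel_subset : (besovKernel ν θ p u x).support ⊆ {x}ᶜ := by
  rintro y hy rfl
  simp [besovKernel] at hy

lemma besovKernel_eq_zero_of_eq {y : Y} (hp : p ≠ 0) (h : u x = u y) :
    besovKernel ν θ p u x y = 0 := by
  simp [besovKernel, h, Real.zero_rpow hp]

lemma besovKernel_le_of_mem_dyadicShell (hu : ∀ z, 0 ≤ u z ∧ u z ≤ 1) (hK : LipschitzWith K u)
    (hK0 : 0 < K) (hp : 0 ≤ p) (hθp : 0 ≤ θ * p) {k : ℤ} {y : Y}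
    (hy : y ∈ dyadicShell x (K : ℝ)⁻¹ k) :
    besovKernel ν θ p u x y ≤ ENNReal.ofReal (min 1 (2 ^ (k + 1)) ^ p) /
      (ENNReal.ofReal ((2 ^ k * (K : ℝ)⁻¹) ^ (θ * p)) * ν (ball x (2 ^ k * (K : ℝ)⁻¹))) := by
  obtain ⟨hlow, hupp⟩ := hy
  have hxy : x ≠ y := by
    rintro rfl
    simp only [dist_self] at hlow
    exact (mul_pos (zpow_pos two_pos k) (inv_pos.mpr (NNReal.coe_pos.mpr hK0))).not_ge hlow
  have hKd : (K : ℝ) * dist x y ≤ 2 ^ (k + 1) := by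
    calc (K : ℝ) * dist x y ≤ K * (2 ^ (k + 1) * (K : ℝ)⁻¹) := by gcongr
      _ = 2 ^ (k + 1) := by field_simp
  rw [besovKernel, if_neg hxy]
  gcongr
  exact (abs_sub_le_min_of_lipschitzWith hu hK x y).trans (min_le_min_left 1 hKd)

lemma setLIntegral_besovKernel_dyadicShell_le {C : ℝ} (hν : IsDoublingWith ν C)
    (hνball : BallsPosFinite ν) (hu : ∀ z, 0 ≤ u z ∧ u z ≤ 1) (hK : LipschitzWith K u)
    (hK0 : 0 < K) (hp : 0 ≤ p) (hθp : 0 ≤ θ * p) (k : ℤ) :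
    ∫⁻ y in dyadicShell x (K : ℝ)⁻¹ k, besovKernel ν θ p u x y ∂ν ≤
      ENNReal.ofReal C * ENNReal.ofReal (K ^ (θ * p) * dyadicWeight p (θ * p) k) := by
  have hr : 0 < (K : ℝ)⁻¹ := inv_pos.mpr (NNReal.coe_pos.mpr hK0)
  set s : ℝ := 2 ^ k * (K : ℝ)⁻¹
  have hs : 0 < s := mul_pos (zpow_pos two_pos k) hr
  obtain ⟨hB0, hBtop⟩ := hνball x s hs
  set a := ENNReal.ofReal (min 1 (2 ^ (k + 1)) ^ p)
  set b := ENNReal.ofReal (s ^ (θ * p))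
  have hb : 0 < s ^ (θ * p) := Real.rpow_pos_of_pos hs _
  have hab : min 1 (2 ^ (k + 1)) ^ p / s ^ (θ * p) = K ^ (θ * p) * dyadicWeight p (θ * p) k := by
    rw [Real.mul_rpow (by positivity) hr.le, Real.inv_rpow K.coe_nonneg,
      ← Real.rpow_zpow_comm zero_le_two, dyadicWeight]
    have : (0 : ℝ) < K ^ (θ * p) := Real.rpow_pos_of_pos (NNReal.coe_pos.mpr hK0) _
    field_simp
  calc ∫⁻ y in dyadicShell x (K : ℝ)⁻¹ k, besovKernel ν θ p u x y ∂ν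
      ≤ ∫⁻ _ in dyadicShell x (K : ℝ)⁻¹ k, a / (b * ν (ball x s)) ∂ν :=
        setLIntegral_mono measurable_const
          fun y hy => besovKernel_le_of_mem_dyadicShell hu hK hK0 hp hθp hy
    _ = a / (b * ν (ball x s)) * ν (dyadicShell x (K : ℝ)⁻¹ k) := setLIntegral_const _ _
    _ ≤ a / (b * ν (ball x s)) * (ENNReal.ofReal C * ν (ball x s)) := by
        gcongr
        exact measure_dyadicShell_le hν x hr k
    _ = ENNReal.ofReal C * (a / b) := by
        rw [ENNReal.mul_comm_div, ENNReal.mul_div_mul_right _ _ hB0.ne' hBtop.ne,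
          ← mul_div_assoc, mul_comm a, mul_div_assoc]
    _ = ENNReal.ofReal C * ENNReal.ofReal (K ^ (θ * p) * dyadicWeight p (θ * p) k) := by
        rw [← ENNReal.ofReal_div_of_pos hb, hab]

theorem besovPointEnergy_le_of_lipschitzWith {C : ℝ} (hν : IsDoublingWith ν C)
    (hνball : BallsPosFinite ν) (hu : ∀ z, 0 ≤ u z ∧ u z ≤ 1) (hK : LipschitzWith K u)
    (hθ0 : 0 < θ) (hθ1 : θ < 1) (hp : 0 < p) (x : Y) :
    besovPointEnergy ν θ p u x ≤
      ENNReal.ofReal C * ENNReal.ofReal (K ^ (θ * p) * ∑' k, dyadicWeight p (θ * p) k) := by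
  rcases eq_zero_or_pos K with rfl | hK0
  · have hzero : ∀ y, besovKernel ν θ p u x y = 0 := fun y =>
      besovKernel_eq_zero_of_eq hp.ne' ((LipschitzWith.zero_iff u).mp hK x y)
    simp only [besovPointEnergy_eq_lintegral_besovKernel, hzero, lintegral_zero, zero_le]
  have hθp : 0 < θ * p := mul_pos hθ0 hp
  have hsum : Summable (dyadicWeight p (θ * p)) :=
    summable_dyadicWeight hθp (mul_lt_of_lt_one_left hp hθ1)
  calc besovPointEnergy ν θ p u x
      = ∫⁻ y in ⋃ k, dyadicShell x (K : ℝ)⁻¹ k, besovKernel ν θ p u x y ∂ν := by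
        rw [iUnion_dyadicShell x (inv_pos.mpr (NNReal.coe_pos.mpr hK0)),
          setLIntegral_eq_of_support_subset support_besovKernel_subset]
        rfl
    _ ≤ ∑' k, ∫⁻ y in dyadicShell x (K : ℝ)⁻¹ k, besovKernel ν θ p u x y ∂ν :=
        lintegral_iUnion_le _ _
    _ ≤ ∑' k, ENNReal.ofReal C * ENNReal.ofReal (K ^ (θ * p) * dyadicWeight p (θ * p) k) :=
        ENNReal.tsum_le_tsum fun k =>
          setLIntegral_besovKernel_dyadicShell_le hν hνball hu hK hK0 hp.le hθp.le k
    _ = ENNReal.ofReal C * ENNReal.ofReal (K ^ (θ * p) * ∑' k, dyadicWeight p (θ * p) k) := by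
        rw [ENNReal.tsum_mul_left, ← ENNReal.ofReal_tsum_of_nonneg
          (fun k => by positivity [dyadicWeight_pos p (θ * p) k]) (hsum.mul_left _),
          _root_.tsum_mul_left]

end MetricSpace

universe u

theorem stmt6 (θ p Cν : ℝ) (hθ0 : 0 < θ) (hθ1 : θ < 1) (hp : 1 ≤ p) (hC : 1 < Cν) :
    ∃ C : ℝ, 0 < C ∧
      ∀ (Y : Type u) [MetricSpace Y] [MeasurableSpace Y] [BorelSpace Y] [CompleteSpace Y]
        (ν : Measure Y), IsDoublingWith ν Cν → BallsPosFinite ν →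
        ∀ (M : ℝ) (η : Y → ℝ), 0 ≤ M → (∀ z, 0 ≤ η z ∧ η z ≤ 1) →
          LipschitzWith (Real.toNNReal M) η →
          ∀ x : Y, besovPointEnergy ν θ p η x ≤ ENNReal.ofReal (C * M ^ (θ * p)) := by
  have hp0 : 0 < p := one_pos.trans_le hp
  set S := ∑' k, dyadicWeight p (θ * p) k
  have hS : 0 < S :=
    (summable_dyadicWeight (mul_pos hθ0 hp0) (mul_lt_of_lt_one_left hp0 hθ1)).tsum_pos
      (fun k => (dyadicWeight_pos _ _ k).le) 0 (dyadicWeight_pos _ _ 0)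
  refine ⟨Cν * S, mul_pos (one_pos.trans hC) hS, ?_⟩
  intro Y _ _ _ _ ν hν hνball M η hM hη hLip x
  lift M to ℝ≥0 using hM
  rw [Real.toNNReal_coe] at hLip
  calc besovPointEnergy ν θ p η x ≤ ENNReal.ofReal Cν * ENNReal.ofReal (M ^ (θ * p) * S) :=
        besovPointEnergy_le_of_lipschitzWith hν hνball hη hLip hθ0 hθ1 hp0 x
    _ = ENNReal.ofReal (Cν * S * M ^ (θ * p)) := by
        rw [← ENNReal.ofReal_mul (one_pos.trans hC).le]
        ring_nf
end

section
/- Assume Y is complete with doubling measure ν, uniformly perfect at x_0 with constant κ, 0 < θ, 1 ≤ p < ∞, and 0 < 2r ≤ R with B(x_0,2R) ≠ Y. Then cap_{θ,p}(B(x_0,r), B(x_0,R)) ≥ c · ν(B(x_0,r)) / R^{θp}, where c > 0 depends only on θ, p, κ and the doubling constant. -/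
open MeasureTheory Metric Set ENNReal

/-! For `x ∈ B(x₀, r)` the admissible `u` equals `1` near `x`, while uniform perfectness yields a
ball `B(y, R/2)` outside `B(x₀, R)`, hence in the zero set of `u`, at distance `≲ κR` from `x`.
The pair `(x, z)` with `z ∈ B(y, R/2)` alone contributes
`ν(B(y, R/2)) / ((3κR)^{θp} ν(B(x, 3κR)))` to the energy at `x`, and doubling bounds this below
by `c / R^{θp}`; integrating over `x ∈ B(x₀, r)` gives the claim. -/

lemma IsDoublingWith.measure_ball_two_pow_mul_le_s7 {Y : Type*} [MetricSpace Y] [MeasurableSpace Y]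
    {ν : Measure Y} {C : ℝ} (hd : IsDoublingWith ν C) (k : ℕ) (x : Y) {s : ℝ} (hs : 0 < s) :
    ν (ball x (2 ^ k * s)) ≤ ENNReal.ofReal C ^ k * ν (ball x s) := by
  induction k with
  | zero => simp
  | succ n ih =>
    calc ν (ball x (2 ^ (n + 1) * s)) = ν (ball x (2 * (2 ^ n * s))) := by ring_nf
      _ ≤ ENNReal.ofReal C * ν (ball x (2 ^ n * s)) := hd x _ (by positivity)
      _ ≤ ENNReal.ofReal C * (ENNReal.ofReal C ^ n * ν (ball x s)) := by gcongr
      _ = ENNReal.ofReal C ^ (n + 1) * ν (ball x s) := by ring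

lemma UnifPerfectAt.exists_dist_mem_Ico {Y : Type*} [MetricSpace Y] {x : Y} {κ a : ℝ}
    (h : UnifPerfectAt x κ) (ha : 0 < a) (hne : ball x a ≠ univ) :
    ∃ y, a ≤ dist x y ∧ dist x y < κ * a := by
  by_cases hκa : ball x (κ * a) = univ
  · obtain ⟨w, hw⟩ := (ne_univ_iff_exists_notMem _).mp hne
    have hwκ : w ∈ ball x (κ * a) := hκa ▸ mem_univ w
    rw [mem_ball, dist_comm, not_lt] at hw
    rw [mem_ball, dist_comm] at hwκ
    exact ⟨w, hw, hwκ⟩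
  · obtain ⟨y, hyκ, hya⟩ := h a ha hκa
    rw [mem_ball, dist_comm] at hyκ
    rw [mem_ball, dist_comm, not_lt] at hya
    exact ⟨y, hya, hyκ⟩

lemma eq_zero_on_ball_of_tsupport_subset_ball {Y : Type*} [MetricSpace Y] {u : Y → ℝ}
    {x₀ y : Y} {R s : ℝ} (hsupp : tsupport u ⊆ ball x₀ R) (hfar : R + s ≤ dist x₀ y) :
    ∀ z ∈ ball y s, u z = 0 := by
  intro z hz
  refine image_eq_zero_of_notMem_tsupport fun hmem => ?_
  have hzx₀ := mem_ball'.mp (hsupp hmem)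
  have hzy := mem_ball.mp hz
  linarith [dist_triangle x₀ z y]

lemma measure_div_le_besovPointEnergy {Y : Type*} [MetricSpace Y] [MeasurableSpace Y]
    {ν : Measure Y} {θ p ρ : ℝ} {u : Y → ℝ} {x : Y} {S : Set Y} (hS : MeasurableSet S)
    (hθp : 0 ≤ θ * p) (hx : u x = 1) (hS0 : ∀ z ∈ S, u z = 0) (hSρ : ∀ z ∈ S, dist x z ≤ ρ) :
    ν S / (ENNReal.ofReal (ρ ^ (θ * p)) * ν (ball x ρ)) ≤ besovPointEnergy ν θ p u x := by
  classical
  calc ν S / (ENNReal.ofReal (ρ ^ (θ * p)) * ν (ball x ρ))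
      = ∫⁻ _ in S, (ENNReal.ofReal (ρ ^ (θ * p)) * ν (ball x ρ))⁻¹ ∂ν := by
        rw [setLIntegral_const, ENNReal.div_eq_inv_mul]
    _ ≤ ∫⁻ z in S, (if x = z then 0 else
          ENNReal.ofReal (|u x - u z| ^ p) /
            (ENNReal.ofReal (dist x z ^ (θ * p)) * ν (ball x (dist x z)))) ∂ν := by
        refine setLIntegral_mono' hS fun z hz => ?_
        have hxz : x ≠ z := fun h => by simp [h, hS0 z hz] at hx
        rw [if_neg hxz, hx, hS0 z hz, sub_zero, abs_one, Real.one_rpow, ENNReal.ofReal_one,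
          one_div]
        gcongr <;> exact hSρ z hz
    _ ≤ besovPointEnergy ν θ p u x := setLIntegral_le_lintegral _ _

lemma inv_mul_le_div_of_le_mul {a C m M : ℝ≥0∞} (hM : M ≤ C * m) (hm0 : m ≠ 0) (hmt : m ≠ ∞) :
    (a * C)⁻¹ ≤ m / (a * M) :=
  calc (a * C)⁻¹ = 1 * m / (a * C * m) := by rw [ENNReal.mul_div_mul_right _ _ hm0 hmt, one_div]
    _ ≤ m / (a * M) := by rw [one_mul, mul_assoc]; gcongr

lemma inv_le_besovPointEnergy {Y : Type*} [MetricSpace Y] [MeasurableSpace Y]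
    [OpensMeasurableSpace Y] {ν : Measure Y} {C θ p ρ s : ℝ} {k : ℕ} {u : Y → ℝ} {x y : Y}
    (hd : IsDoublingWith ν C) (hν : BallsPosFinite ν) (hθp : 0 ≤ θ * p) (hs : 0 < s)
    (hx : u x = 1) (hzero : ∀ z ∈ ball y s, u z = 0) (hρ : ∀ z ∈ ball y s, dist x z ≤ ρ)
    (hball : ball x ρ ⊆ ball y (2 ^ k * s)) :
    (ENNReal.ofReal (ρ ^ (θ * p)) * ENNReal.ofReal C ^ k)⁻¹ ≤ besovPointEnergy ν θ p u x := by
  obtain ⟨hpos, hfin⟩ := hν y s hs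
  refine le_trans (inv_mul_le_div_of_le_mul ?_ hpos.ne' hfin.ne)
    (measure_div_le_besovPointEnergy measurableSet_ball hθp hx hzero hρ)
  exact (measure_mono hball).trans (hd.measure_ball_two_pow_mul_le_s7 k y hs)

lemma mul_measure_le_besovEnergy {Y : Type*} [MetricSpace Y] [MeasurableSpace Y]
    {ν : Measure Y} {θ p : ℝ} {u : Y → ℝ} {E : Set Y} {a : ℝ≥0∞} (hE : MeasurableSet E)
    (h : ∀ x ∈ E, a ≤ besovPointEnergy ν θ p u x) : a * ν E ≤ besovEnergy ν θ p u :=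
  calc a * ν E = ∫⁻ _ in E, a ∂ν := (setLIntegral_const E a).symm
    _ ≤ ∫⁻ x in E, besovPointEnergy ν θ p u x ∂ν := setLIntegral_mono' hE h
    _ ≤ besovEnergy ν θ p u := setLIntegral_le_lintegral _ _

universe u

theorem stmt7 (θ p κ Cν : ℝ) (hθ : 0 < θ) (hp : 1 ≤ p) (hκ : 1 < κ) (hC : 1 < Cν) :
    ∃ c : ℝ, 0 < c ∧
      ∀ (Y : Type u) [MetricSpace Y] [MeasurableSpace Y] [BorelSpace Y] [CompleteSpace Y]
        (ν : Measure Y), IsDoublingWith ν Cν → BallsPosFinite ν →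
        ∀ x₀ : Y, UnifPerfectAt x₀ κ →
        ∀ r R : ℝ, 0 < r → 2 * r ≤ R → ball x₀ (2 * R) ≠ univ →
          ENNReal.ofReal c * (ν (ball x₀ r) / ENNReal.ofReal (R ^ (θ * p))) ≤
            besovCondCap ν θ p (ball x₀ r) (ball x₀ R) := by
  -- `B(x, 3κR) ⊆ B(y, 6κR)` for `x ∈ B(x₀, r)`, so `k` doublings of `B(y, R/2)` cover it.
  obtain ⟨k, hk⟩ : ∃ k : ℕ, 12 * κ < 2 ^ k := pow_unbounded_of_one_lt _ one_lt_two
  have hθp : 0 ≤ θ * p := by positivity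
  set c := ((3 * κ) ^ (θ * p) * Cν ^ k)⁻¹
  refine ⟨c, by positivity, ?_⟩
  intro Y _ _ _ _ ν hd hν x₀ hup r R hr hrR hne
  have hR : 0 < R := by linarith
  have hconst : ENNReal.ofReal c / ENNReal.ofReal (R ^ (θ * p)) =
      (ENNReal.ofReal ((3 * κ * R) ^ (θ * p)) * ENNReal.ofReal Cν ^ k)⁻¹ := by
    rw [← ENNReal.ofReal_div_of_pos (by positivity), ← ENNReal.ofReal_pow (by positivity),
      ← ENNReal.ofReal_mul (by positivity), ← ENNReal.ofReal_inv_of_pos (by positivity),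
      Real.mul_rpow (by positivity) hR.le, mul_right_comm, mul_inv _ (R ^ _), ← div_eq_mul_inv]
  have hsub : ball x₀ (3 / 2 * R) ⊆ ball x₀ (2 * R) := ball_subset_ball (by linarith)
  obtain ⟨y, hy, hyκ⟩ := hup.exists_dist_mem_Ico (a := 3 / 2 * R) (by positivity)
    fun h => hne (univ_subset_iff.mp (h ▸ hsub))
  have hκR : R < κ * R := by nlinarith
  have hkR : 12 * κ * R < 2 ^ k * R := mul_lt_mul_of_pos_right hk hR
  refine le_iInf₂ fun u ⟨_, ⟨G, _, hrG, hG1⟩, _, hsupp⟩ => ?_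
  have hzero := eq_zero_on_ball_of_tsupport_subset_ball (y := y) (s := R / 2) hsupp (by linarith)
  rw [← mul_div_assoc, ENNReal.mul_div_right_comm, hconst]
  refine mul_measure_le_besovEnergy measurableSet_ball fun x hx => ?_
  have hxx₀ := mem_ball.mp hx
  refine inv_le_besovPointEnergy hd hν hθp (half_pos hR) (hG1 x (hrG hx)) hzero
    (fun z hz => ?_) (ball_subset_ball' ?_)
  · linarith [dist_triangle x x₀ y, dist_triangle x y z, mem_ball'.mp hz]
  · linarith [dist_triangle x x₀ y]
end

section
/- Let Y be a compact metric space with doubling measure ν and x_1 a point maximizing d(·, x_0). Form Ŷ = Y ∪ Y' by gluing a disjoint copy Y' of Y at x_1, with metric d̂(x,y) = d(x,x_1) + d'(y,x_1) for x ∈ Y, y ∈ Y', and measure ν̂ = ν + ν'. Then ν̂ is doubling on Ŷ with doubling constant at most 2C_ν, and ν(B^Y(x,r)) ≤ ν̂(B^{Ŷ}(x,r)) ≤ 2ν(B^Y(x,r)) for all x ∈ Y, r > 0. Moreover, if Y is uniformly perfect at x_0 with constant κ, then Ŷ is uniformly perfect at x_0 with constant max{κ, 2}. -/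
open MeasureTheory Metric Set ENNReal

/-!
A ball of radius `r` about a point `x` of one copy meets the other copy only in points `y` with
`d(x, x₁) + d(y, x₁) < r`, hence inside the copy of `B(x, r)`; so `ν̂(B̂(x, r)) ≤ 2 ν(B(x, r))`,
and doubling of `ν̂` follows from doubling of `ν`. For uniform perfectness, with `R = d(x₁, x₀)`:
if `max κ 2 · r ≤ R` the annulus is found in `Y`, otherwise it contains `x₁` (at distance `R`)
or the copy of `x₀` in `Y'` (at distance `2R`), unless `2R < r`, when the ball is all of `Ŷ`.
-/

theorem Isometry.measure_ball_le_map_add_map {Y Z : Type*} [MetricSpace Y] [MetricSpace Z]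
    [MeasurableSpace Y] [MeasurableSpace Z] {j : Y → Z} (hj : Isometry j) (hjm : Measurable j)
    (ν : Measure Y) (j' : Y → Z) (x : Y) (r : ℝ) :
    ν (ball x r) ≤ (ν.map j + ν.map j') (ball (j x) r) := by
  rw [← hj.preimage_ball]
  exact (Measure.le_map_apply hjm.aemeasurable _).trans le_self_add

def GluedAt {Y Z : Type*} [MetricSpace Y] [MetricSpace Z] (j j' : Y → Z) (x₁ : Y) : Prop :=
  ∀ x y : Y, dist (j x) (j' y) = dist x x₁ + dist y x₁

namespace GluedAt

variable {Y Z : Type*} [MetricSpace Y] [MetricSpace Z] {j j' : Y → Z} {x₁ : Y}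

theorem symm (h : GluedAt j j' x₁) : GluedAt j' j x₁ := fun x y => by
  rw [dist_comm, h y x, add_comm]

theorem preimage_ball_subset (h : GluedAt j j' x₁) (x : Y) (r : ℝ) :
    j' ⁻¹' ball (j x) r ⊆ ball x r := fun y hy => by
  rw [mem_preimage, mem_ball, dist_comm, h x y] at hy
  rw [mem_ball]
  linarith [dist_triangle_right y x x₁]

theorem dist_le_three_mul (h : GluedAt j j' x₁) (hj : Isometry j) {x₀ : Y}
    (hx₁ : ∀ x : Y, dist x x₀ ≤ dist x₁ x₀) (hcover : range j ∪ range j' = univ) (z : Z) :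
    dist z (j x₀) ≤ 3 * dist x₁ x₀ := by
  have hz : z ∈ range j ∪ range j' := hcover ▸ mem_univ z
  rcases hz with ⟨y, rfl⟩ | ⟨y, rfl⟩
  · rw [hj.dist_eq]
    linarith [hx₁ y, dist_nonneg (x := x₁) (y := x₀)]
  · rw [h.symm y x₀, dist_comm x₀ x₁]
    linarith [hx₁ y, dist_triangle y x₀ x₁, dist_comm x₀ x₁]

theorem unifPerfectAt (h : GluedAt j j' x₁) (hj : Isometry j) {x₀ : Y}
    (hx₁ : ∀ x : Y, dist x x₀ ≤ dist x₁ x₀) (hcover : range j ∪ range j' = univ)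
    {κ : ℝ} (hY : UnifPerfectAt x₀ κ) : UnifPerfectAt (j x₀) (max κ 2) := by
  intro r hr hne
  set R := dist x₁ x₀
  have hκ : κ * r ≤ max κ 2 * r := mul_le_mul_of_nonneg_right (le_max_left _ _) hr.le
  have h2 : 2 * r ≤ max κ 2 * r := mul_le_mul_of_nonneg_right (le_max_right _ _) hr.le
  by_cases hKR : max κ 2 * r ≤ R
  · have hneY : ball x₀ (κ * r) ≠ univ := fun hball => by
      have := mem_ball.1 (hball ▸ mem_univ x₁)
      linarith
    obtain ⟨y, hy, hy'⟩ := hY r hr hneY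
    exact ⟨j y, by rw [mem_ball, hj.dist_eq]; linarith [mem_ball.1 hy],
      by rwa [mem_ball, hj.dist_eq, ← mem_ball]⟩
  by_cases hrR : r ≤ R
  · refine ⟨j x₁, ?_, ?_⟩ <;> rw [mem_ball, hj.dist_eq] <;> linarith
  by_cases hr2R : r ≤ 2 * R
  · have hd : dist (j' x₀) (j x₀) = 2 * R := by rw [h.symm, dist_comm x₀ x₁, two_mul]
    refine ⟨j' x₀, ?_, ?_⟩ <;> rw [mem_ball, hd] <;> linarith
  -- Every point of the glued space lies within `3R < max κ 2 * r` of `j x₀`.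
  refine absurd (eq_univ_of_forall fun z => mem_ball.2 ?_) hne
  linarith [h.dist_le_three_mul hj hx₁ hcover z]

variable [MeasurableSpace Y] [MeasurableSpace Z] (ν : Measure Y)

theorem map_add_map_ball_le [OpensMeasurableSpace Z] (h : GluedAt j j' x₁) (hj : Isometry j)
    (hjm : Measurable j) (hj'm : Measurable j') (x : Y) (r : ℝ) :
    (ν.map j + ν.map j') (ball (j x) r) ≤ 2 * ν (ball x r) := by
  rw [Measure.add_apply, Measure.map_apply hjm measurableSet_ball,
    Measure.map_apply hj'm measurableSet_ball, hj.preimage_ball, two_mul]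
  gcongr
  exact h.preimage_ball_subset x r

theorem map_add_map_ball_two_mul_le [OpensMeasurableSpace Z] (h : GluedAt j j' x₁)
    (hj : Isometry j) (hjm : Measurable j) (hj'm : Measurable j') {C : ℝ}
    (hdoub : IsDoublingWith ν C) (x : Y) {r : ℝ} (hr : 0 < r) :
    (ν.map j + ν.map j') (ball (j x) (2 * r)) ≤
      ENNReal.ofReal (2 * C) * (ν.map j + ν.map j') (ball (j x) r) := by
  rw [ENNReal.ofReal_mul zero_le_two, ENNReal.ofReal_ofNat, mul_assoc]
  calc (ν.map j + ν.map j') (ball (j x) (2 * r))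
      ≤ 2 * ν (ball x (2 * r)) := h.map_add_map_ball_le ν hj hjm hj'm x _
    _ ≤ 2 * (ENNReal.ofReal C * ν (ball x r)) := by gcongr; exact hdoub x r hr
    _ ≤ 2 * (ENNReal.ofReal C * (ν.map j + ν.map j') (ball (j x) r)) := by
        gcongr; exact hj.measure_ball_le_map_add_map hjm ν j' x r

theorem isDoublingWith_map_add_map [OpensMeasurableSpace Z] (h : GluedAt j j' x₁)
    (hj : Isometry j) (hj' : Isometry j') (hjm : Measurable j) (hj'm : Measurable j')
    (hcover : range j ∪ range j' = univ) {C : ℝ} (hdoub : IsDoublingWith ν C) :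
    IsDoublingWith (ν.map j + ν.map j') (2 * C) := by
  intro z r hr
  have hz : z ∈ range j ∪ range j' := hcover ▸ mem_univ z
  rcases hz with ⟨x, rfl⟩ | ⟨x, rfl⟩
  · exact h.map_add_map_ball_two_mul_le ν hj hjm hj'm hdoub x hr
  · rw [add_comm (ν.map j)]
    exact h.symm.map_add_map_ball_two_mul_le ν hj' hj'm hjm hdoub x hr

end GluedAt

theorem stmt15_general {Y Z : Type*} [MetricSpace Y] [MeasurableSpace Y]
    [MetricSpace Z] [MeasurableSpace Z] [BorelSpace Z]
    (ν : Measure Y) (Cν : ℝ)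
    (hdoub : IsDoublingWith ν Cν)
    (x₀ x₁ : Y) (hx₁ : ∀ x : Y, dist x x₀ ≤ dist x₁ x₀)
    -- `j` and `j'` embed the two copies of `Y` into the glued space `Z = Ŷ`
    (j j' : Y → Z) (hj : Isometry j) (hj' : Isometry j')
    (hjm : Measurable j) (hj'm : Measurable j')
    (hcover : Set.range j ∪ Set.range j' = univ)
    (hdist : ∀ x y : Y, dist (j x) (j' y) = dist x x₁ + dist y x₁) :
    -- the glued measure ν̂ = j_*ν + j'_*ν is doubling with constant at most 2 Cν
    (∀ (z : Z) (r : ℝ), 0 < r →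
        (ν.map j + ν.map j') (ball z (2 * r)) ≤
          ENNReal.ofReal (2 * Cν) * (ν.map j + ν.map j') (ball z r)) ∧
    -- comparison of ν̂ with ν on balls centred in the first copy of Y
    (∀ (x : Y) (r : ℝ), 0 < r →
        ν (ball x r) ≤ (ν.map j + ν.map j') (ball (j x) r) ∧
        (ν.map j + ν.map j') (ball (j x) r) ≤ 2 * ν (ball x r)) ∧
    -- uniform perfectness transfers with constant max κ 2
    (∀ κ : ℝ, 1 < κ → UnifPerfectAt x₀ κ → UnifPerfectAt (j x₀) (max κ 2)) := by
  have h : GluedAt j j' x₁ := hdist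
  refine ⟨h.isDoublingWith_map_add_map ν hj hj' hjm hj'm hcover hdoub, fun x r _ => ?_,
    fun κ _ hY => h.unifPerfectAt hj hx₁ hcover hY⟩
  exact ⟨hj.measure_ball_le_map_add_map hjm ν j' x r, h.map_add_map_ball_le ν hj hjm hj'm x r⟩

theorem stmt15 {Y Z : Type*} [MetricSpace Y] [MeasurableSpace Y] [BorelSpace Y]
    [CompactSpace Y] [MetricSpace Z] [MeasurableSpace Z] [BorelSpace Z]
    (ν : Measure Y) (Cν : ℝ) (hC : 1 < Cν)
    (hdoub : IsDoublingWith ν Cν) (hballs : BallsPosFinite ν)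
    (x₀ x₁ : Y) (hx₁ : ∀ x : Y, dist x x₀ ≤ dist x₁ x₀)
    -- `j` and `j'` embed the two copies of `Y` into the glued space `Z = Ŷ`
    (j j' : Y → Z) (hj : Isometry j) (hj' : Isometry j')
    (hjm : Measurable j) (hj'm : Measurable j')
    (hglue : j x₁ = j' x₁)
    (hcover : Set.range j ∪ Set.range j' = univ)
    (hdist : ∀ x y : Y, dist (j x) (j' y) = dist x x₁ + dist y x₁) :
    -- the glued measure ν̂ = j_*ν + j'_*ν is doubling with constant at most 2 Cν
    (∀ (z : Z) (r : ℝ), 0 < r →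
        (ν.map j + ν.map j') (ball z (2 * r)) ≤
          ENNReal.ofReal (2 * Cν) * (ν.map j + ν.map j') (ball z r)) ∧
    -- comparison of ν̂ with ν on balls centred in the first copy of Y
    (∀ (x : Y) (r : ℝ), 0 < r →
        ν (ball x r) ≤ (ν.map j + ν.map j') (ball (j x) r) ∧
        (ν.map j + ν.map j') (ball (j x) r) ≤ 2 * ν (ball x r)) ∧
    -- uniform perfectness transfers with constant max κ 2
    (∀ κ : ℝ, 1 < κ → UnifPerfectAt x₀ κ → UnifPerfectAt (j x₀) (max κ 2)) :=
  stmt15_general ν Cν hdoub x₀ x₁ hx₁ j j' hj hj' hjm hj'm hcover hdist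
end
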